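/- Let f : ℝ^{m₁×m₂} → ℝ be convex and differentiable, λ > 0, and let X, X̃ ∈ ℝ^{m₁×m₂} satisfy f(X) + λ‖X‖_{σ,1} ≤ f(X̃) + λ‖X̃‖_{σ,1} and λ ≥ 2‖∇f(X̃)‖_{σ,∞}. Then ‖P⊥_{X̃}(X − X̃)‖_{σ,1} ≤ 3‖P_{X̃}(X − X̃)‖_{σ,1}. (In the paper f = L_Y, the empirical negative log-likelihood, and X̃ = X̄.) -/

import Mathlib

open MeasureTheory ProbabilityTheory Matrix

/-- Singular values of a rectangular real matrix: square roots of the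
eigenvalues of `Xᵀ * X`. -/
noncomputable def singVals {m₁ m₂ : ℕ} (X : Matrix (Fin m₁) (Fin m₂) ℝ) : Fin m₂ → ℝ :=
  fun i => Real.sqrt ((show (Xᵀ * X).IsHermitian by
    rw [← Matrix.conjTranspose_eq_transpose_of_trivial]; exact Matrix.isHermitian_conjTranspose_mul_self X).eigenvalues i)

/-- Nuclear (Schatten-1) norm `‖·‖_{σ,1}`. -/
noncomputable def nucNorm {m₁ m₂ : ℕ} (X : Matrix (Fin m₁) (Fin m₂) ℝ) : ℝ :=
  ∑ i, singVals X i

/-- Operator (Schatten-∞) norm `‖·‖_{σ,∞}`: the largest singular value. -/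
noncomputable def opNorm {m₁ m₂ : ℕ} (X : Matrix (Fin m₁) (Fin m₂) ℝ) : ℝ :=
  ⨆ i, singVals X i

/-- Frobenius (Schatten-2) norm `‖·‖_{σ,2}`. -/
noncomputable def frobNorm {m₁ m₂ : ℕ} (X : Matrix (Fin m₁) (Fin m₂) ℝ) : ℝ :=
  Real.sqrt (∑ k, ∑ l, (X k l) ^ 2)

/-- Entrywise sup norm `‖·‖_∞`. -/
noncomputable def linfNorm {m₁ m₂ : ℕ} (X : Matrix (Fin m₁) (Fin m₂) ℝ) : ℝ :=
  ⨆ p : Fin m₁ × Fin m₂, |X p.1 p.2|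

/-- The matrix of the orthogonal projection onto a subspace `S` of `ℝ^k`. -/
noncomputable def projM {k : ℕ} (S : Submodule ℝ (EuclideanSpace ℝ (Fin k))) :
    Matrix (Fin k) (Fin k) ℝ :=
  LinearMap.toMatrix (EuclideanSpace.basisFun (Fin k) ℝ).toBasis
    (EuclideanSpace.basisFun (Fin k) ℝ).toBasis
    (S.subtype ∘ₗ (S.orthogonalProjectionOnto).toLinearMap)

/-- The span `S₁(X)` of the left singular vectors of `X`, i.e. its column space
(`S₂(X)`, the span of the right singular vectors, is `colSpace Xᵀ`). -/
noncomputable def colSpace {m₁ m₂ : ℕ} (X : Matrix (Fin m₁) (Fin m₂) ℝ) :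
    Submodule ℝ (EuclideanSpace ℝ (Fin m₁)) :=
  LinearMap.range (Matrix.toEuclideanLin X)

/-- The projection `P⊥_X(T) = P_{S₁(X)⊥} T P_{S₂(X)⊥}`. -/
noncomputable def Pperp {m₁ m₂ : ℕ} (X T : Matrix (Fin m₁) (Fin m₂) ℝ) :
    Matrix (Fin m₁) (Fin m₂) ℝ :=
  projM (Submodule.orthogonal (colSpace X)) * T * projM (Submodule.orthogonal (colSpace Xᵀ))

/-- The projection `P_X(T) = T - P⊥_X(T)`. -/
noncomputable def Ppar {m₁ m₂ : ℕ} (X T : Matrix (Fin m₁) (Fin m₂) ℝ) :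
    Matrix (Fin m₁) (Fin m₂) ℝ :=
  T - Pperp X T

/-!
Convexity and trace duality give `f X ≥ f X̃ + ⟪∇f(X̃), X - X̃⟫ ≥ f X̃ - ‖∇f(X̃)‖_{σ,∞} ‖X - X̃‖_{σ,1}`,
so the hypotheses yield `λ (‖X‖_{σ,1} - ‖X̃‖_{σ,1}) ≤ (λ / 2) ‖X - X̃‖_{σ,1}`.
Split `X - X̃ = M + P` with `M = P⊥_{X̃}(X - X̃)`. The column and row spaces of `M` are orthogonal to
those of `X̃`, so the nuclear norm is additive on `X̃ + M`, whence
`‖X‖_{σ,1} ≥ ‖X̃‖_{σ,1} + ‖M‖_{σ,1} - ‖P‖_{σ,1}`; together with `‖X - X̃‖_{σ,1} ≤ ‖M‖_{σ,1} + ‖P‖_{σ,1}`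
this gives `‖M‖_{σ,1} ≤ 3 ‖P‖_{σ,1}`.

Trace duality, the triangle inequality and additivity all come from dual certificates
`W = ∑ᵢ uᵢ vᵢᵀ` assembled from singular vectors: by Bessel's inequality and Cauchy–Schwarz the
bilinear form of such a `W` is bounded by `1` on unit vectors.
-/

theorem ConvexOn.add_apply_sub_le_of_hasFDerivAt {E : Type*} [NormedAddCommGroup E]
    [NormedSpace ℝ E] {s : Set E} {f : E → ℝ} (hf : ConvexOn ℝ s f) {x y : E}
    (hx : x ∈ s) (hy : y ∈ s) {L : E →L[ℝ] ℝ} (hL : HasFDerivAt f L x) :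
    f x + L (y - x) ≤ f y := by
  let γ : ℝ →ᵃ[ℝ] E := AffineMap.lineMap x y
  have hline : ConvexOn ℝ (γ ⁻¹' s) (f ∘ γ) := hf.comp_affineMap γ
  have hderiv : HasDerivAt (f ∘ γ) (L (y - x)) 0 := by
    refine HasFDerivAt.comp_hasDerivAt (0 : ℝ) ?_ AffineMap.hasDerivAt_lineMap
    simpa [γ] using hL
  have hslope := hline.le_slope_of_hasDerivAt (x := 0) (y := 1) (by simpa [γ] using hx)
    (by simpa [γ] using hy) one_pos hderiv
  simp only [slope, Function.comp, γ, AffineMap.lineMap_apply_zero,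
    AffineMap.lineMap_apply_one, vsub_eq_sub, sub_zero, inv_one, one_smul] at hslope
  linarith

theorem Matrix.apply_eq_trace_transpose_mul {m n R : Type*} [Fintype m] [Fintype n]
    [DecidableEq m] [DecidableEq n] [CommSemiring R] (L : Matrix m n R →ₗ[R] R)
    {G : Matrix m n R} (hG : ∀ k l, G k l = L (single k l 1)) (Δ : Matrix m n R) :
    L Δ = (Gᵀ * Δ).trace := by
  conv_lhs => rw [matrix_eq_sum_single Δ]
  simp only [map_sum, trace, diag, mul_apply, transpose_apply, hG]
  rw [Finset.sum_comm]
  refine Finset.sum_congr rfl fun k _ => Finset.sum_congr rfl fun l _ => ?_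
  rw [mul_comm, ← smul_eq_mul, ← map_smul, smul_single, smul_eq_mul, mul_one]

section Frames

variable {ι n : Type*} [Fintype n]

def SubOrthonormal (u : ι → n → ℝ) : Prop :=
  Pairwise (fun i j => u i ⬝ᵥ u j = 0) ∧ ∀ i, u i ⬝ᵥ u i ≤ 1

theorem SubOrthonormal.sum_sq_dotProduct_le [Fintype ι] {u : ι → n → ℝ} (hu : SubOrthonormal u)
    (x : n → ℝ) : ∑ i, (u i ⬝ᵥ x) ^ 2 ≤ x ⬝ᵥ x := by
  classical
  set c : ι → ℝ := fun i => u i ⬝ᵥ x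
  set y := ∑ i, c i • u i
  have hxy : x ⬝ᵥ y = ∑ i, c i ^ 2 := by
    rw [dotProduct_comm, sum_dotProduct]
    simp only [smul_dotProduct, smul_eq_mul, c, sq]
  have hyy : y ⬝ᵥ y = ∑ i, c i ^ 2 * (u i ⬝ᵥ u i) := by
    simp only [y, dotProduct_sum, sum_dotProduct, dotProduct_smul, smul_dotProduct, smul_eq_mul]
    refine Finset.sum_congr rfl fun j _ => ?_
    rw [Finset.sum_eq_single j (fun i _ hij => by simp [hu.1 hij])
      (by simp)]
    ring
  have hsq : 0 ≤ (x - y) ⬝ᵥ (x - y) := Finset.sum_nonneg fun k _ => mul_self_nonneg _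
  have hle : ∑ i, c i ^ 2 * (u i ⬝ᵥ u i) ≤ ∑ i, c i ^ 2 :=
    Finset.sum_le_sum fun i _ => mul_le_of_le_one_right (sq_nonneg _) (hu.2 i)
  rw [sub_dotProduct, dotProduct_sub, dotProduct_sub, dotProduct_comm y x, hxy, hyy] at hsq
  linarith

theorem SubOrthonormal.sumElim {κ : Type*} {u : ι → n → ℝ} {v : κ → n → ℝ}
    (hu : SubOrthonormal u) (hv : SubOrthonormal v) (huv : ∀ i j, u i ⬝ᵥ v j = 0) :
    SubOrthonormal (Sum.elim u v) := by
  refine ⟨?_, ?_⟩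
  · rintro (i | i) (j | j) hij
    · exact hu.1 fun h => hij (congrArg _ h)
    · exact huv i j
    · exact (dotProduct_comm _ _).trans (huv j i)
    · exact hv.1 fun h => hij (congrArg _ h)
  · rintro (i | i)
    exacts [hu.2 i, hv.2 i]

end Frames

section OpNorm

variable {m n : Type*} [Fintype m] [Fintype n]

/-- The spectral-norm bound `‖W‖_{σ,∞} ≤ c`, in the bilinear form `aᵀ W b ≤ c` for
`‖a‖, ‖b‖ ≤ 1` that trace duality uses. -/
def OpNormLE (W : Matrix m n ℝ) (c : ℝ) : Prop :=
  ∀ a b, a ⬝ᵥ a ≤ 1 → b ⬝ᵥ b ≤ 1 → a ⬝ᵥ (W *ᵥ b) ≤ c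

theorem OpNormLE.neg {W : Matrix m n ℝ} {c : ℝ} (hW : OpNormLE W c) : OpNormLE (-W) c := by
  intro a b ha hb
  simpa [neg_mulVec, dotProduct_neg, neg_dotProduct] using hW (-a) b (by simpa using ha) hb

theorem dotProduct_sum_vecMulVec_mulVec {ι : Type*} [Fintype ι] (U : ι → m → ℝ)
    (V : ι → n → ℝ) (a : m → ℝ) (b : n → ℝ) :
    a ⬝ᵥ ((∑ i, vecMulVec (U i) (V i)) *ᵥ b) = ∑ i, (a ⬝ᵥ U i) * (V i ⬝ᵥ b) := by
  simp only [sum_mulVec, vecMulVec_mulVec, dotProduct_sum]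
  refine Finset.sum_congr rfl fun i _ => ?_
  rw [op_smul_eq_smul, dotProduct_smul, smul_eq_mul, mul_comm]

theorem dotProduct_sum_vecMulVec_mulVec_self {ι : Type*} [Fintype ι] {U : ι → m → ℝ}
    (hU : Pairwise fun i j => U i ⬝ᵥ U j = 0) (V : ι → n → ℝ) (k : ι) :
    U k ⬝ᵥ ((∑ i, vecMulVec (U i) (V i)) *ᵥ V k) = (U k ⬝ᵥ U k) * (V k ⬝ᵥ V k) := by
  rw [dotProduct_sum_vecMulVec_mulVec,
    Finset.sum_eq_single k (fun i _ hik => by rw [hU hik.symm, zero_mul]) (by simp)]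

theorem sum_abs_dotProduct_mul_abs_dotProduct_le_one {ι : Type*} [Fintype ι] {U : ι → m → ℝ}
    {V : ι → n → ℝ} (hU : SubOrthonormal U) (hV : SubOrthonormal V) {a : m → ℝ} {b : n → ℝ}
    (ha : a ⬝ᵥ a ≤ 1) (hb : b ⬝ᵥ b ≤ 1) : ∑ i, |a ⬝ᵥ U i| * |V i ⬝ᵥ b| ≤ 1 := by
  have hUa : ∑ i, |a ⬝ᵥ U i| ^ 2 ≤ 1 := by
    simpa only [sq_abs, dotProduct_comm a] using (hU.sum_sq_dotProduct_le a).trans ha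
  have hVb : ∑ i, |V i ⬝ᵥ b| ^ 2 ≤ 1 := by
    simpa only [sq_abs] using (hV.sum_sq_dotProduct_le b).trans hb
  have hcs := Finset.sum_mul_sq_le_sq_mul_sq Finset.univ (fun i => |a ⬝ᵥ U i|)
    (fun i => |V i ⬝ᵥ b|)
  have hnn : 0 ≤ ∑ i, |a ⬝ᵥ U i| ^ 2 := Finset.sum_nonneg fun i _ => sq_nonneg _
  nlinarith

theorem opNormLE_sum_smul_vecMulVec {ι : Type*} [Fintype ι] {U : ι → m → ℝ}
    {V : ι → n → ℝ} (hU : SubOrthonormal U) (hV : SubOrthonormal V) {s : ι → ℝ} {c : ℝ}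
    (hc : 0 ≤ c) (hs : ∀ i, |s i| ≤ c) : OpNormLE (∑ i, s i • vecMulVec (U i) (V i)) c := by
  intro a b ha hb
  calc a ⬝ᵥ ((∑ i, s i • vecMulVec (U i) (V i)) *ᵥ b)
      = ∑ i, s i * ((a ⬝ᵥ U i) * (V i ⬝ᵥ b)) := by
        simp only [← smul_vecMulVec, dotProduct_sum_vecMulVec_mulVec, dotProduct_smul,
          smul_eq_mul, mul_assoc]
    _ ≤ ∑ i, c * (|a ⬝ᵥ U i| * |V i ⬝ᵥ b|) := Finset.sum_le_sum fun i _ =>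
        (le_abs_self _).trans (by
          rw [abs_mul, abs_mul]
          exact mul_le_mul_of_nonneg_right (hs i) (by positivity))
    _ = c * ∑ i, |a ⬝ᵥ U i| * |V i ⬝ᵥ b| := (Finset.mul_sum _ _ _).symm
    _ ≤ c := mul_le_of_le_one_right hc
        (sum_abs_dotProduct_mul_abs_dotProduct_le_one hU hV ha hb)

end OpNorm

theorem Matrix.isHermitian_transpose_mul_self {m n : Type*} [Fintype m]
    (X : Matrix m n ℝ) : (Xᵀ * X).IsHermitian :=
  isHermitian_conjTranspose_mul_self X

section Eigen

variable {n : Type*} [Fintype n] [DecidableEq n] {A : Matrix n n ℝ}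

theorem Matrix.IsHermitian.dotProduct_eigenvectorBasis (hA : A.IsHermitian) (i j : n) :
    ⇑(hA.eigenvectorBasis i) ⬝ᵥ ⇑(hA.eigenvectorBasis j) = if i = j then 1 else 0 := by
  have h := congrFun (congrFun (Unitary.coe_star_mul_self hA.eigenvectorUnitary) i) j
  simpa [mul_apply, one_apply, dotProduct] using h

theorem Matrix.IsHermitian.sum_vecMulVec_eigenvectorBasis (hA : A.IsHermitian) :
    ∑ i, vecMulVec ⇑(hA.eigenvectorBasis i) ⇑(hA.eigenvectorBasis i) = 1 := by
  have h := Unitary.coe_mul_star_self hA.eigenvectorUnitary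
  ext a b
  simpa [mul_apply, one_apply, vecMulVec_apply, Matrix.sum_apply] using congrFun (congrFun h a) b

end Eigen

section SVD

variable {m₁ m₂ : ℕ}

theorem singVals_nonneg (X : Matrix (Fin m₁) (Fin m₂) ℝ) (i : Fin m₂) : 0 ≤ singVals X i :=
  Real.sqrt_nonneg _

theorem singVals_sq (X : Matrix (Fin m₁) (Fin m₂) ℝ) (i : Fin m₂) :
    singVals X i ^ 2 = (isHermitian_transpose_mul_self X).eigenvalues i :=
  Real.sq_sqrt (eigenvalues_conjTranspose_mul_self_nonneg X i)

theorem singVals_eq_of_transpose_mul_self_eq {A B : Matrix (Fin m₁) (Fin m₂) ℝ}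
    (h : Aᵀ * A = Bᵀ * B) : singVals A = singVals B := by
  unfold singVals
  congr! 3

theorem nucNorm_nonneg (X : Matrix (Fin m₁) (Fin m₂) ℝ) : 0 ≤ nucNorm X :=
  Finset.sum_nonneg fun i _ => singVals_nonneg X i

theorem singVals_le_opNorm (X : Matrix (Fin m₁) (Fin m₂) ℝ) (i : Fin m₂) :
    singVals X i ≤ opNorm X :=
  le_ciSup (Set.finite_range _).bddAbove i

theorem opNorm_nonneg (X : Matrix (Fin m₁) (Fin m₂) ℝ) : 0 ≤ opNorm X := by
  rcases isEmpty_or_nonempty (Fin m₂) with h | ⟨⟨i⟩⟩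
  · exact (Real.iSup_of_isEmpty _).ge
  · exact (singVals_nonneg X i).trans (singVals_le_opNorm X i)

theorem dotProduct_mulVec_eigenvectorBasis (X : Matrix (Fin m₁) (Fin m₂) ℝ) (i j : Fin m₂) :
    (X *ᵥ ⇑((isHermitian_transpose_mul_self X).eigenvectorBasis i)) ⬝ᵥ
        (X *ᵥ ⇑((isHermitian_transpose_mul_self X).eigenvectorBasis j)) =
      if i = j then singVals X i ^ 2 else 0 := by
  set hH := isHermitian_transpose_mul_self X
  rw [dotProduct_mulVec, ← mulVec_transpose, mulVec_mulVec, hH.mulVec_eigenvectorBasis,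
    smul_dotProduct, hH.dotProduct_eigenvectorBasis, singVals_sq]
  split_ifs with h <;> simp [h]

theorem mulVec_eigenvectorBasis_eq_zero {X : Matrix (Fin m₁) (Fin m₂) ℝ} {i : Fin m₂}
    (hi : singVals X i = 0) :
    X *ᵥ ⇑((isHermitian_transpose_mul_self X).eigenvectorBasis i) = 0 := by
  simpa [hi] using dotProduct_mulVec_eigenvectorBasis X i i

structure SVD (X : Matrix (Fin m₁) (Fin m₂) ℝ) where
  u : Fin m₂ → Fin m₁ → ℝ
  v : Fin m₂ → Fin m₂ → ℝ
  dotProduct_u : ∀ i j, u i ⬝ᵥ u j = if i = j ∧ singVals X i ≠ 0 then 1 else 0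
  dotProduct_v : ∀ i j, v i ⬝ᵥ v j = if i = j ∧ singVals X i ≠ 0 then 1 else 0
  eq_sum : X = ∑ i, singVals X i • vecMulVec (u i) (v i)
  u_mem : ∀ i, ∃ w, u i = X *ᵥ w
  v_mem : ∀ i, ∃ w, v i = Xᵀ *ᵥ w

noncomputable def svd (X : Matrix (Fin m₁) (Fin m₂) ℝ) : SVD X :=
  let hH := isHermitian_transpose_mul_self X
  let e i := ⇑(hH.eigenvectorBasis i)
  -- For `σᵢ = 0` the junk value `0⁻¹ = 0` makes `uᵢ = 0`, as the `ite`s in `SVD` require.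
  { u := fun i => (singVals X i)⁻¹ • (X *ᵥ e i)
    v := fun i => if singVals X i = 0 then 0 else e i
    dotProduct_u := fun i j => by
      simp only [dotProduct_smul, smul_dotProduct, smul_eq_mul, e,
        dotProduct_mulVec_eigenvectorBasis]
      by_cases hij : i = j
      · subst hij
        by_cases hi : singVals X i = 0
        · simp [hi]
        · rw [if_pos rfl, if_pos ⟨rfl, hi⟩]
          field_simp
      · simp [hij]
    dotProduct_v := fun i j => by
      by_cases hij : i = j
      · subst hij
        by_cases hi : singVals X i = 0 <;> simp [hi, e, hH.dotProduct_eigenvectorBasis]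
      · split_ifs <;> simp_all [e, hH.dotProduct_eigenvectorBasis]
    eq_sum := by
      have hterm : ∀ i, singVals X i • vecMulVec ((singVals X i)⁻¹ • (X *ᵥ e i))
          (if singVals X i = 0 then 0 else e i) = X * vecMulVec (e i) (e i) := by
        intro i
        rw [mul_vecMulVec]
        by_cases hi : singVals X i = 0
        · simp [hi, e, mulVec_eigenvectorBasis_eq_zero hi]
        · simp [hi, smul_vecMulVec, smul_smul]
      simp only [hterm, ← Matrix.mul_sum, e, hH.sum_vecMulVec_eigenvectorBasis, Matrix.mul_one]
    u_mem := fun i => ⟨(singVals X i)⁻¹ • e i, by rw [mulVec_smul]⟩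
    v_mem := fun i => by
      by_cases hi : singVals X i = 0
      · exact ⟨0, by simp [hi]⟩
      · refine ⟨(singVals X i ^ 2)⁻¹ • (X *ᵥ e i), ?_⟩
        rw [mulVec_smul, mulVec_mulVec, hH.mulVec_eigenvectorBasis, ← singVals_sq, smul_smul,
          inv_mul_cancel₀ (pow_ne_zero 2 hi), one_smul, if_neg hi] }

end SVD

theorem projM_isHermitian {k : ℕ} (S : Submodule ℝ (EuclideanSpace ℝ (Fin k))) :
    (projM S).IsHermitian := by
  rw [← isSymmetric_toLin_iff (EuclideanSpace.basisFun (Fin k) ℝ), projM, toLin_toMatrix]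
  exact S.starProjection_isSymmetric

theorem projM_transpose {k : ℕ} (S : Submodule ℝ (EuclideanSpace ℝ (Fin k))) :
    (projM S)ᵀ = projM S :=
  (projM_isHermitian S).eq

theorem projM_mulVec {k : ℕ} (S : Submodule ℝ (EuclideanSpace ℝ (Fin k))) (x : Fin k → ℝ) :
    projM S *ᵥ x = S.starProjection (WithLp.toLp 2 x) :=
  LinearMap.toMatrix_mulVec_repr _ _ _ (WithLp.toLp 2 x)

theorem projM_orthogonal_colSpace_mul {k n : ℕ} (X : Matrix (Fin k) (Fin n) ℝ) :
    projM (colSpace X)ᗮ * X = 0 := by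
  refine ext_of_mulVec_single fun j => ?_
  rw [← mulVec_mulVec, projM_mulVec, zero_mulVec]
  have hmem : WithLp.toLp 2 (X *ᵥ Pi.single j 1) ∈ colSpace X := ⟨WithLp.toLp 2 (Pi.single j 1), rfl⟩
  rw [(Submodule.starProjection_apply_eq_zero_iff _).mpr
    ((colSpace X).le_orthogonal_orthogonal hmem)]
  rfl

theorem transpose_mul_projM_orthogonal_colSpace {k n : ℕ} (X : Matrix (Fin k) (Fin n) ℝ) :
    Xᵀ * projM (colSpace X)ᗮ = 0 := by
  rw [← projM_transpose, ← transpose_mul, projM_orthogonal_colSpace_mul, transpose_zero]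

theorem transpose_mul_Pperp {m₁ m₂ : ℕ} (X T : Matrix (Fin m₁) (Fin m₂) ℝ) :
    Xᵀ * Pperp X T = 0 := by
  rw [Pperp, ← Matrix.mul_assoc, ← Matrix.mul_assoc, transpose_mul_projM_orthogonal_colSpace,
    Matrix.zero_mul, Matrix.zero_mul]

theorem mul_transpose_Pperp {m₁ m₂ : ℕ} (X T : Matrix (Fin m₁) (Fin m₂) ℝ) :
    X * (Pperp X T)ᵀ = 0 := by
  have h := transpose_mul_projM_orthogonal_colSpace Xᵀ
  rw [transpose_transpose] at h
  rw [Pperp, transpose_mul, projM_transpose, ← Matrix.mul_assoc, h, Matrix.zero_mul]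

section Duality

variable {m₁ m₂ : ℕ}

theorem SVD.subOrthonormal_u {X : Matrix (Fin m₁) (Fin m₂) ℝ} (S : SVD X) :
    SubOrthonormal S.u :=
  ⟨fun i j hij => by simp [S.dotProduct_u, hij],
    fun i => by rw [S.dotProduct_u]; split_ifs <;> norm_num⟩

theorem SVD.subOrthonormal_v {X : Matrix (Fin m₁) (Fin m₂) ℝ} (S : SVD X) :
    SubOrthonormal S.v :=
  ⟨fun i j hij => by simp [S.dotProduct_v, hij],
    fun i => by rw [S.dotProduct_v]; split_ifs <;> norm_num⟩

theorem SVD.trace_transpose_mul {X : Matrix (Fin m₁) (Fin m₂) ℝ} (S : SVD X)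
    (W : Matrix (Fin m₁) (Fin m₂) ℝ) :
    (Wᵀ * X).trace = ∑ i, singVals X i * (S.u i ⬝ᵥ (W *ᵥ S.v i)) := by
  conv_lhs => rw [S.eq_sum]
  simp only [Matrix.mul_sum, Matrix.mul_smul, trace_sum, trace_smul, mul_vecMulVec,
    trace_vecMulVec, mulVec_transpose, ← dotProduct_mulVec, smul_eq_mul]

theorem SVD.trace_transpose_mul_eq_nucNorm {X : Matrix (Fin m₁) (Fin m₂) ℝ} (S : SVD X)
    {W : Matrix (Fin m₁) (Fin m₂) ℝ} (hW : ∀ i, singVals X i ≠ 0 → S.u i ⬝ᵥ (W *ᵥ S.v i) = 1) :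
    (Wᵀ * X).trace = nucNorm X := by
  rw [S.trace_transpose_mul, nucNorm]
  refine Finset.sum_congr rfl fun i _ => ?_
  by_cases hi : singVals X i = 0
  · rw [hi, zero_mul]
  · rw [hW i hi, mul_one]

theorem OpNormLE.trace_transpose_mul_le {W : Matrix (Fin m₁) (Fin m₂) ℝ} {c : ℝ}
    (hW : OpNormLE W c) (X : Matrix (Fin m₁) (Fin m₂) ℝ) : (Wᵀ * X).trace ≤ c * nucNorm X := by
  let S := svd X
  rw [S.trace_transpose_mul, nucNorm, Finset.mul_sum]
  refine Finset.sum_le_sum fun i _ => ?_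
  rw [mul_comm c]
  exact mul_le_mul_of_nonneg_left
    (hW _ _ (S.subOrthonormal_u.2 i) (S.subOrthonormal_v.2 i)) (singVals_nonneg X i)

theorem OpNormLE.abs_trace_transpose_mul_le {W : Matrix (Fin m₁) (Fin m₂) ℝ} {c : ℝ}
    (hW : OpNormLE W c) (X : Matrix (Fin m₁) (Fin m₂) ℝ) :
    |(Wᵀ * X).trace| ≤ c * nucNorm X := by
  have hneg := hW.neg.trace_transpose_mul_le X
  rw [transpose_neg, Matrix.neg_mul, trace_neg] at hneg
  exact abs_le.mpr ⟨by linarith, hW.trace_transpose_mul_le X⟩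

theorem opNormLE_opNorm (G : Matrix (Fin m₁) (Fin m₂) ℝ) : OpNormLE G (opNorm G) := by
  let S := svd G
  have h := opNormLE_sum_smul_vecMulVec S.subOrthonormal_u S.subOrthonormal_v (opNorm_nonneg G)
    fun i => (abs_of_nonneg (singVals_nonneg G i)).trans_le (singVals_le_opNorm G i)
  rwa [← S.eq_sum] at h

theorem dotProduct_mulVec_mulVec_eq_zero {k : ℕ} {A : Matrix (Fin k) (Fin m₁) ℝ}
    {B : Matrix (Fin k) (Fin m₂) ℝ} (h : Aᵀ * B = 0) (x : Fin m₁ → ℝ) (y : Fin m₂ → ℝ) :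
    (A *ᵥ x) ⬝ᵥ (B *ᵥ y) = 0 := by
  rw [dotProduct_comm, dotProduct_mulVec, ← mulVec_transpose, mulVec_mulVec, h, zero_mulVec,
    zero_dotProduct]

theorem exists_dual_certificate (A B : Matrix (Fin m₁) (Fin m₂) ℝ) (hcol : Aᵀ * B = 0)
    (hrow : A * Bᵀ = 0) :
    ∃ W : Matrix (Fin m₁) (Fin m₂) ℝ,
      OpNormLE W 1 ∧ (Wᵀ * A).trace = nucNorm A ∧ (Wᵀ * B).trace = nucNorm B := by
  let SA := svd A
  let SB := svd B
  have hu : ∀ i j, SA.u i ⬝ᵥ SB.u j = 0 := fun i j => by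
    obtain ⟨x, hx⟩ := SA.u_mem i
    obtain ⟨y, hy⟩ := SB.u_mem j
    rw [hx, hy]
    exact dotProduct_mulVec_mulVec_eq_zero hcol x y
  have hv : ∀ i j, SA.v i ⬝ᵥ SB.v j = 0 := fun i j => by
    obtain ⟨x, hx⟩ := SA.v_mem i
    obtain ⟨y, hy⟩ := SB.v_mem j
    rw [hx, hy]
    exact dotProduct_mulVec_mulVec_eq_zero (by rwa [transpose_transpose]) x y
  have hU := SA.subOrthonormal_u.sumElim SB.subOrthonormal_u hu
  have hV := SA.subOrthonormal_v.sumElim SB.subOrthonormal_v hv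
  refine ⟨∑ i, vecMulVec (Sum.elim SA.u SB.u i) (Sum.elim SA.v SB.v i), ?_, ?_, ?_⟩
  · simpa using opNormLE_sum_smul_vecMulVec hU hV zero_le_one (s := 1) (by simp)
  · refine SA.trace_transpose_mul_eq_nucNorm fun i hi => ?_
    have h := dotProduct_sum_vecMulVec_mulVec_self hU.1 (Sum.elim SA.v SB.v) (Sum.inl i)
    rw [Sum.elim_inl, Sum.elim_inl] at h
    rw [h, SA.dotProduct_u, SA.dotProduct_v, if_pos ⟨rfl, hi⟩, mul_one]
  · refine SB.trace_transpose_mul_eq_nucNorm fun i hi => ?_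
    have h := dotProduct_sum_vecMulVec_mulVec_self hU.1 (Sum.elim SA.v SB.v) (Sum.inr i)
    rw [Sum.elim_inr, Sum.elim_inr] at h
    rw [h, SB.dotProduct_u, SB.dotProduct_v, if_pos ⟨rfl, hi⟩, mul_one]

theorem nucNorm_add_le (A B : Matrix (Fin m₁) (Fin m₂) ℝ) :
    nucNorm (A + B) ≤ nucNorm A + nucNorm B := by
  obtain ⟨W, hW, hWAB, -⟩ := exists_dual_certificate (A + B) 0 (by simp) (by simp)
  rw [← hWAB, Matrix.mul_add, trace_add]
  simpa using add_le_add (hW.trace_transpose_mul_le A) (hW.trace_transpose_mul_le B)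

theorem nucNorm_add_of_orthogonal {A B : Matrix (Fin m₁) (Fin m₂) ℝ} (hcol : Aᵀ * B = 0)
    (hrow : A * Bᵀ = 0) : nucNorm (A + B) = nucNorm A + nucNorm B := by
  refine (nucNorm_add_le A B).antisymm ?_
  obtain ⟨W, hW, hWA, hWB⟩ := exists_dual_certificate A B hcol hrow
  rw [← hWA, ← hWB, ← trace_add, ← Matrix.mul_add]
  simpa using hW.trace_transpose_mul_le (A + B)

theorem nucNorm_neg (A : Matrix (Fin m₁) (Fin m₂) ℝ) : nucNorm (-A) = nucNorm A := by
  rw [nucNorm, nucNorm, singVals_eq_of_transpose_mul_self_eq]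
  rw [transpose_neg, Matrix.neg_mul, Matrix.mul_neg, neg_neg]

end Duality

attribute [local instance] Matrix.normedAddCommGroup Matrix.normedSpace

theorem nuc_cone_condition_general (m₁ m₂ : ℕ) (f : Matrix (Fin m₁) (Fin m₂) ℝ → ℝ)
    (hconv : ConvexOn ℝ Set.univ f)
    (lam : ℝ) (hlam : 0 < lam)
    (X Xt : Matrix (Fin m₁) (Fin m₂) ℝ)
    (L : Matrix (Fin m₁) (Fin m₂) ℝ →L[ℝ] ℝ) (hL : HasFDerivAt f L Xt)
    (Gf : Matrix (Fin m₁) (Fin m₂) ℝ)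
    (hGf : ∀ k l, Gf k l = L (Matrix.single k l (1 : ℝ)))
    (hmin : f X + lam * nucNorm X ≤ f Xt + lam * nucNorm Xt)
    (hlam2 : 2 * opNorm Gf ≤ lam) :
    nucNorm (Pperp Xt (X - Xt)) ≤ 3 * nucNorm (Ppar Xt (X - Xt)) := by
  set M := Pperp Xt (X - Xt)
  set P := Ppar Xt (X - Xt)
  have hsplit : X - Xt = M + P := by simp [P, Ppar, M]
  have hfirst : f Xt + L (X - Xt) ≤ f X :=
    hconv.add_apply_sub_le_of_hasFDerivAt trivial trivial hL
  have hgrad : |L (X - Xt)| ≤ opNorm Gf * nucNorm (X - Xt) := by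
    have hrep : L (X - Xt) = (Gfᵀ * (X - Xt)).trace :=
      apply_eq_trace_transpose_mul L.toLinearMap hGf _
    rw [hrep]
    exact (opNormLE_opNorm Gf).abs_trace_transpose_mul_le _
  have hdecomp : nucNorm (Xt + M) = nucNorm Xt + nucNorm M :=
    nucNorm_add_of_orthogonal (transpose_mul_Pperp Xt _) (mul_transpose_Pperp Xt _)
  have hXtM : nucNorm (Xt + M) ≤ nucNorm X + nucNorm P := by
    have hX : Xt + M = X + -P := by
      rw [sub_eq_iff_eq_add] at hsplit
      rw [hsplit]
      abel
    rw [hX, ← nucNorm_neg P]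
    exact nucNorm_add_le X (-P)
  have hΔ : nucNorm (X - Xt) ≤ nucNorm M + nucNorm P := hsplit ▸ nucNorm_add_le M P
  have hobjective : lam * nucNorm X ≤ lam * nucNorm Xt + opNorm Gf * nucNorm (X - Xt) := by
    linarith [neg_abs_le (L (X - Xt))]
  have hgradΔ : 2 * opNorm Gf * nucNorm (X - Xt) ≤ lam * (nucNorm M + nucNorm P) :=
    mul_le_mul hlam2 hΔ (nucNorm_nonneg _) hlam.le
  have hlower : lam * (nucNorm Xt + nucNorm M - nucNorm P) ≤ lam * nucNorm X :=
    mul_le_mul_of_nonneg_left (by linarith) hlam.le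
  exact le_of_mul_le_mul_left (by linarith) hlam

/-- Lemma 2(i): for a convex differentiable data-fitting term `f` (in the paper
`f = L_Y`), if `X` has smaller penalized objective than `X̃` and
`λ ≥ 2‖∇f(X̃)‖_{σ,∞}`, then the error lies in a cone. `Gf` is the gradient matrix of `f` at `X̃`,
i.e. the matrix representing the Fréchet derivative `L` of `f` at `X̃`. -/
theorem nuc_cone_condition (m₁ m₂ : ℕ) (f : Matrix (Fin m₁) (Fin m₂) ℝ → ℝ)
    (hconv : ConvexOn ℝ Set.univ f) (hdiff : Differentiable ℝ f)
    (lam : ℝ) (hlam : 0 < lam)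
    (X Xt : Matrix (Fin m₁) (Fin m₂) ℝ)
    (L : Matrix (Fin m₁) (Fin m₂) ℝ →L[ℝ] ℝ) (hL : HasFDerivAt f L Xt)
    (Gf : Matrix (Fin m₁) (Fin m₂) ℝ)
    (hGf : ∀ k l, Gf k l = L (Matrix.single k l (1 : ℝ)))
    (hmin : f X + lam * nucNorm X ≤ f Xt + lam * nucNorm Xt)
    (hlam2 : 2 * opNorm Gf ≤ lam) :
    nucNorm (Pperp Xt (X - Xt)) ≤ 3 * nucNorm (Ppar Xt (X - Xt)) :=
  nuc_cone_condition_general m₁ m₂ f hconv lam hlam X Xt L hL Gf hGf hmin hlam2
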